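/- Fix θ̄ ∈ (0,π/2). For m ∈ (0,1), define the reciprocal-regime coupling constant J̃(θ̄|m) = (1/2)·log( (1 + √m·sn(θ̄·2K(√m)/π | √m)) / dn(θ̄·2K(√m)/π | √m) ), which is the Z-invariant Ising coupling constant for the reciprocal squared modulus k² = 1/m > 1 under Jacobi's real transformation. Then m ↦ J̃(θ̄|m) is strictly increasing on (0,1), tends to 0 as m → 0⁺ and tends to +∞ as m → 1⁻; equivalently, as k² increases from 1 to +∞ the coupling constant decreases from +∞ to 0, so the reciprocal regime k² > 1 covers the same range of temperatures as k² ∈ (−∞,1) and does not reach a new (e.g., anti-ferromagnetic) regime. -/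

import Mathlib

open Real Filter

/-- Complete elliptic integral of the first kind `K`, as a function of the
squared modulus `m = k²`. -/
noncomputable def ellK (m : ℝ) : ℝ :=
  ∫ τ in (0:ℝ)..(π/2), 1 / Real.sqrt (1 - m * Real.sin τ ^ 2)

/-- The incomplete elliptic integral of the first kind
`φ ↦ ∫₀^φ (1 - k² sin² t)^{-1/2} dt`, as a function of the squared modulus `m = k²`. -/
noncomputable def amF (m φ : ℝ) : ℝ :=
  ∫ t in (0:ℝ)..φ, 1 / Real.sqrt (1 - m * Real.sin t ^ 2)

/-- Jacobi's amplitude, the inverse of `amF m`, squared modulus `m = k²`. -/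
noncomputable def am (m u : ℝ) : ℝ := Function.invFun (amF m) u

/-- Jacobi elliptic function `sn`, squared modulus `m = k²`. -/
noncomputable def sn (u m : ℝ) : ℝ := Real.sin (am m u)

/-- Jacobi elliptic function `cn`, squared modulus `m = k²`. -/
noncomputable def cn (u m : ℝ) : ℝ := Real.cos (am m u)

/-- Jacobi elliptic function `dn`, squared modulus `m = k²`. -/
noncomputable def dn (u m : ℝ) : ℝ := Real.sqrt (1 - m * sn u m ^ 2)

/-- Jacobi elliptic function `sc = sn/cn`, squared modulus `m = k²`. -/
noncomputable def sc (u m : ℝ) : ℝ := sn u m / cn u m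

/-- The reciprocal-regime coupling constant `J̃(θ̄|m)`, i.e., the Z-invariant Ising
coupling constant with reciprocal squared modulus `k² = 1/m > 1` under Jacobi's real
transformation, expressed via the modulus `κ = √m` (squared modulus `m ∈ (0,1)`). -/
noncomputable def Jrec (θbar m : ℝ) : ℝ :=
  (1 / 2) * Real.log
    ((1 + Real.sqrt m * sn (θbar * (2 * ellK m) / π) m) /
      dn (θbar * (2 * ellK m) / π) m)

/-
Put `c = 2θ̄/π ∈ (0,1)` and `q(m) = √m · sn(c K(m) | √m)`. Since `dn² = 1 - q²`, the coupling
constant is `J̃(θ̄|m) = artanh(q(m)) / 2`, so everything reduces to the behaviour of `q`.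

For `m₁ < m₂` the ratio of the integrands `(1 - m sin²t)^{-1/2}` of `F(·|m₂)` and `F(·|m₁)`
increases with `t` on `[0, π/2]`; this forces `F(φ|m) / K(m)` to decrease in `m`. Hence the
amplitude `φ(m) = am(c K(m)|m)`, defined by `F(φ(m)|m) = c K(m)`, increases with `m`, and so
does `q(m) = √m · sin φ(m)`.

`|q(m)| ≤ √m` gives `q → 0` as `m → 0`. As `m → 1`, `K(m) ≥ log(1 + π / (2√(1 - m))) → ∞`
while `F(a|m) ≤ ∫₀^a sec` stays bounded for each `a < π/2`; so `φ(m) → π/2` and `q(m) → 1`.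
-/

open Set intervalIntegral Topology

noncomputable def ellIntegrand (m t : ℝ) : ℝ := 1 / √(1 - m * sin t ^ 2)

section ellIntegrand

variable {m : ℝ}

theorem one_sub_mul_sin_sq_pos (hm : m < 1) (t : ℝ) : 0 < 1 - m * sin t ^ 2 := by
  have h₁ := sin_sq_le_one t
  have h₀ := sq_nonneg (sin t)
  rcases le_or_gt 0 m with hm₀ | hm₀ <;> nlinarith

theorem ellIntegrand_pos (hm : m < 1) (t : ℝ) : 0 < ellIntegrand m t :=
  one_div_pos.2 (sqrt_pos.2 (one_sub_mul_sin_sq_pos hm t))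

theorem continuous_ellIntegrand (hm : m < 1) : Continuous (ellIntegrand m) :=
  continuous_const.div (by fun_prop) fun t => (sqrt_pos.2 (one_sub_mul_sin_sq_pos hm t)).ne'

theorem intervalIntegrable_ellIntegrand (hm : m < 1) (a b : ℝ) :
    IntervalIntegrable (ellIntegrand m) MeasureTheory.volume a b :=
  (continuous_ellIntegrand hm).intervalIntegrable a b

theorem one_le_ellIntegrand (hm₀ : 0 ≤ m) (hm : m < 1) (t : ℝ) : 1 ≤ ellIntegrand m t := by
  refine (one_le_div (sqrt_pos.2 (one_sub_mul_sin_sq_pos hm t))).2 (sqrt_le_one.2 ?_)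
  nlinarith [sq_nonneg (sin t)]

theorem ellIntegrand_le_inv_cos (hm : m ≤ 1) {t : ℝ} (ht : 0 < cos t) :
    ellIntegrand m t ≤ 1 / cos t := by
  refine one_div_le_one_div_of_le ht ((le_sqrt' ht).2 ?_)
  nlinarith [sin_sq_add_cos_sq t, sq_nonneg (sin t)]

theorem inv_sqrt_one_sub_add_le_ellIntegrand (hm : m < 1) {t : ℝ} (ht : t ∈ Icc 0 (π / 2)) :
    1 / (√(1 - m) + (π / 2 - t)) ≤ ellIntegrand m t := by
  have hcos : 0 ≤ cos t := cos_nonneg_of_mem_Icc ⟨by linarith [ht.1, pi_pos], ht.2⟩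
  have hε := sq_sqrt (sub_nonneg.2 hm.le)
  -- `1 - m sin²t = (1 - m) + m cos²t ≤ (√(1 - m) + cos t)²` and `cos t ≤ π/2 - t`
  have hdn : √(1 - m * sin t ^ 2) ≤ √(1 - m) + cos t := by
    refine (sqrt_le_left (by positivity)).2 ?_
    nlinarith [sin_sq_add_cos_sq t, sqrt_nonneg (1 - m), mul_nonneg (sqrt_nonneg (1 - m)) hcos]
  have hcos_le : cos t ≤ π / 2 - t := by
    rw [← sin_pi_div_two_sub]
    exact sin_le (by linarith [ht.2])
  exact one_div_le_one_div_of_le (sqrt_pos.2 (one_sub_mul_sin_sq_pos hm t)) (by linarith)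

theorem ellIntegrand_mul_lt {m₁ m₂ t s : ℝ} (hm : m₁ < m₂) (hm₂ : m₂ < 1)
    (hts : sin t ^ 2 < sin s ^ 2) :
    ellIntegrand m₂ t * ellIntegrand m₁ s < ellIntegrand m₂ s * ellIntegrand m₁ t := by
  have h₁t := one_sub_mul_sin_sq_pos (hm.trans hm₂) t
  have h₁s := one_sub_mul_sin_sq_pos (hm.trans hm₂) s
  have h₂t := one_sub_mul_sin_sq_pos hm₂ t
  have h₂s := one_sub_mul_sin_sq_pos hm₂ s
  simp only [ellIntegrand, div_mul_div_comm, one_mul, ← sqrt_mul h₂t.le, ← sqrt_mul h₂s.le]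
  refine one_div_lt_one_div_of_lt (sqrt_pos.2 (by positivity)) (sqrt_lt_sqrt (by positivity) ?_)
  nlinarith

theorem ellIntegrand_mul_le {m₁ m₂ t s : ℝ} (hm : m₁ ≤ m₂) (hm₂ : m₂ < 1)
    (hts : sin t ^ 2 ≤ sin s ^ 2) :
    ellIntegrand m₂ t * ellIntegrand m₁ s ≤ ellIntegrand m₂ s * ellIntegrand m₁ t := by
  rcases hm.lt_or_eq with hm | rfl
  · rcases hts.lt_or_eq with hts | hts
    · exact (ellIntegrand_mul_lt hm hm₂ hts).le
    · simp only [ellIntegrand, hts, le_refl]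
  · rw [mul_comm]

end ellIntegrand

theorem sin_sq_lt_sin_sq {t s : ℝ} (ht : 0 ≤ t) (hts : t < s) (hs : s ≤ π / 2) :
    sin t ^ 2 < sin s ^ 2 :=
  pow_lt_pow_left₀ (sin_lt_sin_of_lt_of_le_pi_div_two (by linarith [pi_pos]) hs hts)
    (sin_nonneg_of_nonneg_of_le_pi ht (by linarith [pi_pos])) two_ne_zero

theorem sin_sq_le_sin_sq {t s : ℝ} (ht : 0 ≤ t) (hts : t ≤ s) (hs : s ≤ π / 2) :
    sin t ^ 2 ≤ sin s ^ 2 :=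
  pow_le_pow_left₀ (sin_nonneg_of_nonneg_of_le_pi ht (by linarith [pi_pos]))
    (sin_le_sin_of_le_of_le_pi_div_two (by linarith [pi_pos]) hs hts) 2

section amF

variable {m : ℝ}

theorem amF_add (hm : m < 1) (a b : ℝ) :
    amF m a + ∫ t in a..b, ellIntegrand m t = amF m b :=
  integral_add_adjacent_intervals (intervalIntegrable_ellIntegrand hm 0 a)
    (intervalIntegrable_ellIntegrand hm a b)

theorem amF_zero : amF m 0 = 0 := integral_same

theorem continuous_amF (hm : m < 1) : Continuous (amF m) :=
  continuous_primitive (intervalIntegrable_ellIntegrand hm) 0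

theorem amF_strictMono (hm : m < 1) : StrictMono (amF m) := fun a b hab => by
  have := intervalIntegral_pos_of_pos_on (intervalIntegrable_ellIntegrand hm a b)
    (fun t _ => ellIntegrand_pos hm t) hab
  linarith [amF_add hm a b]

theorem sub_le_amF_sub (hm₀ : 0 ≤ m) (hm : m < 1) {a b : ℝ} (hab : a ≤ b) :
    b - a ≤ amF m b - amF m a := by
  have := integral_mono_on hab intervalIntegrable_const (intervalIntegrable_ellIntegrand hm a b)
    fun t _ => one_le_ellIntegrand hm₀ hm t
  rw [integral_const, smul_eq_mul, mul_one] at this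
  linarith [amF_add hm a b]

theorem amF_surjective (hm₀ : 0 ≤ m) (hm : m < 1) : Function.Surjective (amF m) := by
  refine (continuous_amF hm).surjective ?_ ?_
  · refine tendsto_atTop_mono' _ ?_ tendsto_id
    filter_upwards [eventually_ge_atTop 0] with φ hφ
    simpa [amF_zero] using sub_le_amF_sub hm₀ hm hφ
  · refine tendsto_atBot_mono' _ ?_ tendsto_id
    filter_upwards [eventually_le_atBot 0] with φ hφ
    simpa [amF_zero] using sub_le_amF_sub hm₀ hm hφ

theorem ellK_pos (hm : m < 1) : 0 < ellK m := by
  have h := amF_strictMono hm pi_div_two_pos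
  rwa [amF_zero] at h

theorem amF_am (hm₀ : 0 ≤ m) (hm : m < 1) (u : ℝ) : amF m (am m u) = u :=
  Function.invFun_eq (amF_surjective hm₀ hm u)

theorem lt_am_iff (hm₀ : 0 ≤ m) (hm : m < 1) {φ u : ℝ} : φ < am m u ↔ amF m φ < u := by
  conv_rhs => rw [← amF_am hm₀ hm u]
  exact (amF_strictMono hm).lt_iff_lt.symm

theorem am_lt_iff (hm₀ : 0 ≤ m) (hm : m < 1) {φ u : ℝ} : am m u < φ ↔ u < amF m φ := by
  conv_rhs => rw [← amF_am hm₀ hm u]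
  exact (amF_strictMono hm).lt_iff_lt.symm

theorem am_mem_Ioo (hm₀ : 0 ≤ m) (hm : m < 1) {u : ℝ} (hu : u ∈ Ioo 0 (ellK m)) :
    am m u ∈ Ioo 0 (π / 2) :=
  ⟨(lt_am_iff hm₀ hm).2 (amF_zero.trans_lt hu.1), (am_lt_iff hm₀ hm).2 hu.2⟩

theorem mul_ellK_mem_Ioo {c : ℝ} (hc : c ∈ Ioo 0 1) (hm : m < 1) :
    c * ellK m ∈ Ioo 0 (ellK m) :=
  ⟨mul_pos hc.1 (ellK_pos hm), mul_lt_of_lt_one_left (ellK_pos hm) hc.2⟩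

end amF

theorem integral_mul_integral_lt_of_ratio_lt {f g : ℝ → ℝ} {a b c : ℝ} (hab : a < b) (hbc : b < c)
    (hf : IntervalIntegrable f MeasureTheory.volume a c)
    (hg : IntervalIntegrable g MeasureTheory.volume a c)
    (hf_pos : ∀ x ∈ Icc a c, 0 < f x)
    (hlt : ∀ x ∈ Ioo a b, g x * f b < g b * f x)
    (hle : ∀ x ∈ Icc b c, g b * f x ≤ g x * f b) :
    (∫ x in a..b, g x) * (∫ x in b..c, f x) < (∫ x in a..b, f x) * ∫ x in b..c, g x := by
  have hsub₁ : uIcc a b ⊆ uIcc a c := uIcc_subset_uIcc left_mem_uIcc (mem_uIcc_of_le hab.le hbc.le)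
  have hsub₂ : uIcc b c ⊆ uIcc a c := uIcc_subset_uIcc (mem_uIcc_of_le hab.le hbc.le) right_mem_uIcc
  have hf₁ := hf.mono_set hsub₁
  have hf₂ := hf.mono_set hsub₂
  have hg₁ := hg.mono_set hsub₁
  have hg₂ := hg.mono_set hsub₂
  have hfb := hf_pos b ⟨hab.le, hbc.le⟩
  have hA : 0 < ∫ x in a..b, f x :=
    intervalIntegral_pos_of_pos_on hf₁ (fun x hx => hf_pos x ⟨hx.1.le, hx.2.le.trans hbc.le⟩) hab
  have hC : 0 < ∫ x in b..c, f x :=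
    intervalIntegral_pos_of_pos_on hf₂ (fun x hx => hf_pos x ⟨hab.le.trans hx.1.le, hx.2.le⟩) hbc
  have h₁ : (∫ x in a..b, g x) * f b < g b * ∫ x in a..b, f x := by
    have := intervalIntegral_pos_of_pos_on ((hf₁.const_mul (g b)).sub (hg₁.mul_const (f b)))
      (fun x hx => sub_pos.2 (hlt x hx)) hab
    rwa [integral_sub (hf₁.const_mul (g b)) (hg₁.mul_const (f b)), integral_const_mul,
      integral_mul_const, sub_pos] at this
  have h₂ : g b * (∫ x in b..c, f x) ≤ (∫ x in b..c, g x) * f b := by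
    have := integral_mono_on hbc.le (hf₂.const_mul (g b)) (hg₂.mul_const (f b)) hle
    rwa [integral_const_mul, integral_mul_const] at this
  refine lt_of_mul_lt_mul_right ?_ hfb.le
  nlinarith

theorem amF_mul_ellK_lt {m₁ m₂ φ : ℝ} (hm : m₁ < m₂) (hm₂ : m₂ < 1) (hφ : φ ∈ Ioo 0 (π / 2)) :
    amF m₂ φ * ellK m₁ < amF m₁ φ * ellK m₂ := by
  have hm₁ := hm.trans hm₂
  have key : amF m₂ φ * (∫ t in φ..π / 2, ellIntegrand m₁ t) <
      amF m₁ φ * ∫ t in φ..π / 2, ellIntegrand m₂ t :=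
    integral_mul_integral_lt_of_ratio_lt hφ.1 hφ.2 (intervalIntegrable_ellIntegrand hm₁ _ _)
      (intervalIntegrable_ellIntegrand hm₂ _ _) (fun x _ => ellIntegrand_pos hm₁ x)
      (fun x hx => ellIntegrand_mul_lt hm hm₂ (sin_sq_lt_sin_sq hx.1.le hx.2 hφ.2.le))
      (fun x hx => ellIntegrand_mul_le hm.le hm₂ (sin_sq_le_sin_sq hφ.1.le hx.1 hx.2))
  have hK₁ : ellK m₁ = amF m₁ φ + ∫ t in φ..π / 2, ellIntegrand m₁ t := (amF_add hm₁ _ _).symm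
  have hK₂ : ellK m₂ = amF m₂ φ + ∫ t in φ..π / 2, ellIntegrand m₂ t := (amF_add hm₂ _ _).symm
  rw [hK₁, hK₂]
  linear_combination key

theorem am_mul_ellK_lt {c m₁ m₂ : ℝ} (hc : c ∈ Ioo 0 1) (hm₁ : 0 ≤ m₁) (hm : m₁ < m₂)
    (hm₂ : m₂ < 1) : am m₁ (c * ellK m₁) < am m₂ (c * ellK m₂) := by
  have hm₁' := hm.trans hm₂
  have hφ := am_mem_Ioo hm₁ hm₁' (mul_ellK_mem_Ioo hc hm₁')
  have h := amF_mul_ellK_lt hm hm₂ hφ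
  rw [amF_am hm₁ hm₁'] at h
  rw [lt_am_iff (hm₁.trans hm.le) hm₂]
  refine lt_of_mul_lt_mul_right ?_ (ellK_pos hm₁').le
  linear_combination h

noncomputable def ksn (c m : ℝ) : ℝ := √m * sn (c * ellK m) m

section ksn

variable {c m : ℝ}

theorem abs_ksn_le (c m : ℝ) : |ksn c m| ≤ √m := by
  rw [ksn, abs_mul, abs_of_nonneg (sqrt_nonneg m)]
  exact mul_le_of_le_one_right (sqrt_nonneg m) (abs_sin_le_one _)

theorem ksn_mem_Ioo (hm₀ : 0 ≤ m) (hm : m < 1) : ksn c m ∈ Ioo (-1) 1 :=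
  abs_lt.1 ((abs_ksn_le c m).trans_lt ((sqrt_lt_sqrt hm₀ hm).trans_eq sqrt_one))

theorem strictMonoOn_ksn (hc : c ∈ Ioo 0 1) : StrictMonoOn (ksn c) (Ico 0 1) := by
  intro m₁ h₁ m₂ h₂ hm
  have hφ₁ := am_mem_Ioo h₁.1 h₁.2 (mul_ellK_mem_Ioo hc h₁.2)
  have hφ₂ := am_mem_Ioo h₂.1 h₂.2 (mul_ellK_mem_Ioo hc h₂.2)
  exact mul_lt_mul'' (sqrt_lt_sqrt h₁.1 hm)
    (sin_lt_sin_of_lt_of_le_pi_div_two (by linarith [hφ₁.1, pi_pos]) hφ₂.2.le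
      (am_mul_ellK_lt hc h₁.1 hm h₂.2))
    (sqrt_nonneg _) (sin_nonneg_of_nonneg_of_le_pi hφ₁.1.le (by linarith [hφ₁.2, pi_pos]))

theorem tendsto_ksn_nhds_zero (c : ℝ) : Tendsto (ksn c) (𝓝 0) (𝓝 0) :=
  squeeze_zero_norm (fun m => abs_ksn_le c m) (by simpa using continuous_sqrt.tendsto 0)

end ksn

theorem log_one_add_le_ellK {m : ℝ} (hm : m < 1) : log (1 + π / 2 / √(1 - m)) ≤ ellK m := by
  set ε := √(1 - m)
  have hε : 0 < ε := sqrt_pos.2 (sub_pos.2 hm)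
  have hint : ∫ t in (0 : ℝ)..π / 2, 1 / (ε + (π / 2 - t)) = log (1 + π / 2 / ε) := by
    have h0 : (0 : ℝ) ∉ uIcc ε (ε + π / 2) := by
      rw [uIcc_of_le (by linarith [pi_pos])]
      exact fun h => hε.not_ge h.1
    have := integral_comp_sub_left (fun x => 1 / x) (a := 0) (b := π / 2) (ε + π / 2)
    simp only [add_sub_assoc] at this
    rw [this, sub_self, add_zero, sub_zero, integral_one_div h0]
    congr 1
    field_simp
  rw [← hint]
  refine integral_mono_on pi_div_two_pos.le ?_ (intervalIntegrable_ellIntegrand hm _ _)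
    fun t ht => inv_sqrt_one_sub_add_le_ellIntegrand hm ht
  refine ContinuousOn.intervalIntegrable_of_Icc pi_div_two_pos.le ?_
  exact continuousOn_const.div (by fun_prop) fun t ht => by linarith [ht.2]

theorem tendsto_one_sub_nhdsLT_one : Tendsto (fun x : ℝ => 1 - x) (𝓝[<] 1) (𝓝[>] 0) := by
  refine tendsto_nhdsWithin_of_tendsto_nhds_of_eventually_within _ ?_ ?_
  · exact ((continuous_sub_left 1).tendsto' 1 0 (sub_self 1)).mono_left nhdsWithin_le_nhds
  · filter_upwards [self_mem_nhdsWithin] with x hx using sub_pos.2 (mem_Iio.1 hx)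

theorem tendsto_ellK_nhdsLT_one : Tendsto ellK (𝓝[<] 1) atTop := by
  have hε : Tendsto (fun m => √(1 - m)) (𝓝[<] 1) (𝓝[>] 0) := by
    refine tendsto_nhdsWithin_of_tendsto_nhds_of_eventually_within _ ?_ ?_
    · exact (continuous_sqrt.tendsto' 0 0 sqrt_zero).comp
        (tendsto_one_sub_nhdsLT_one.mono_right nhdsWithin_le_nhds)
    · filter_upwards [self_mem_nhdsWithin] with x hx using sqrt_pos.2 (sub_pos.2 hx)
  have hlog : Tendsto (fun m => log (1 + π / 2 / √(1 - m))) (𝓝[<] 1) atTop := by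
    refine tendsto_log_atTop.comp (tendsto_atTop_add_const_left _ 1 ?_)
    exact ((tendsto_inv_nhdsGT_zero.comp hε).const_mul_atTop pi_div_two_pos).congr
      fun m => (div_eq_mul_inv _ _).symm
  exact tendsto_atTop_mono' _ (eventually_nhdsWithin_of_forall fun m hm => log_one_add_le_ellK hm)
    hlog

theorem amF_le_integral_inv_cos {m a : ℝ} (hm : m < 1) (ha : a ∈ Ico 0 (π / 2)) :
    amF m a ≤ ∫ t in (0 : ℝ)..a, 1 / cos t := by
  have hcos : ∀ t ∈ Icc 0 a, 0 < cos t := fun t ht =>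
    cos_pos_of_mem_Ioo ⟨by linarith [ht.1, pi_pos], ht.2.trans_lt ha.2⟩
  refine integral_mono_on ha.1 (intervalIntegrable_ellIntegrand hm _ _) ?_
    fun t ht => ellIntegrand_le_inv_cos hm.le (hcos t ht)
  exact (continuousOn_const.div continuous_cos.continuousOn fun t ht => (hcos t ht).ne')
    |>.intervalIntegrable_of_Icc ha.1

theorem tendsto_am_mul_ellK {c : ℝ} (hc : c ∈ Ioo 0 1) :
    Tendsto (fun m => am m (c * ellK m)) (𝓝[<] 1) (𝓝 (π / 2)) := by
  have hI : ∀ᶠ m : ℝ in 𝓝[<] 1, m ∈ Ioo 0 1 := Ioo_mem_nhdsLT one_pos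
  have hcK := tendsto_ellK_nhdsLT_one.const_mul_atTop hc.1
  refine tendsto_order.2 ⟨fun a ha => ?_, fun a ha => ?_⟩
  · rcases le_or_gt a 0 with ha₀ | ha₀
    · filter_upwards [hI] with m hm using
        ha₀.trans_lt (am_mem_Ioo hm.1.le hm.2 (mul_ellK_mem_Ioo hc hm.2)).1
    · filter_upwards [hI, hcK.eventually_gt_atTop (∫ t in (0 : ℝ)..a, 1 / cos t)] with m hm hmK
      exact (lt_am_iff hm.1.le hm.2).2
        ((amF_le_integral_inv_cos hm.2 ⟨ha₀.le, ha⟩).trans_lt hmK)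
  · filter_upwards [hI] with m hm using
      (am_mem_Ioo hm.1.le hm.2 (mul_ellK_mem_Ioo hc hm.2)).2.trans ha

theorem tendsto_ksn_nhdsLT_one {c : ℝ} (hc : c ∈ Ioo 0 1) :
    Tendsto (ksn c) (𝓝[<] 1) (𝓝[<] 1) := by
  refine tendsto_nhdsWithin_of_tendsto_nhds_of_eventually_within _ ?_ ?_
  · have := ((continuous_sqrt.tendsto 1).mono_left nhdsWithin_le_nhds).mul
      ((continuous_sin.tendsto _).comp (tendsto_am_mul_ellK hc))
    rwa [sqrt_one, sin_pi_div_two, one_mul] at this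
  · filter_upwards [Ioo_mem_nhdsLT one_pos] with m hm using (ksn_mem_Ioo hm.1.le hm.2).2

theorem continuousAt_artanh {x : ℝ} (hx : x ∈ Ioo (-1) 1) : ContinuousAt artanh x := by
  have h₁ : 0 < 1 - x := sub_pos.2 hx.2
  have h₂ : 0 < (1 + x) / (1 - x) := div_pos (by linarith [hx.1]) h₁
  exact ((continuousAt_const.add continuousAt_id).div (continuousAt_const.sub continuousAt_id)
    h₁.ne').sqrt.log (sqrt_pos.2 h₂).ne'

theorem tendsto_artanh_nhdsLT_one : Tendsto artanh (𝓝[<] 1) atTop := by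
  have hnum : Tendsto (fun x : ℝ => 1 + x) (𝓝[<] 1) (𝓝 2) :=
    ((continuous_const_add 1).tendsto' 1 2 one_add_one_eq_two).mono_left nhdsWithin_le_nhds
  have := hnum.pos_mul_atTop two_pos (tendsto_inv_nhdsGT_zero.comp tendsto_one_sub_nhdsLT_one)
  exact tendsto_log_atTop.comp (tendsto_sqrt_atTop.comp this)

theorem log_one_add_div_sqrt_one_sub_sq {x : ℝ} (hx : x ∈ Ioo (-1) 1) :
    log ((1 + x) / √(1 - x ^ 2)) = artanh x := by
  have h₁ : 0 < 1 + x := by linarith [hx.1]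
  have h₂ : 0 < 1 - x := by linarith [hx.2]
  have h : 1 - x ^ 2 = (1 + x) * (1 - x) := by ring
  rw [artanh, h, sqrt_mul h₁.le, sqrt_div h₁.le, div_mul_eq_div_div, div_sqrt]

theorem Jrec_eq_half_artanh (θbar : ℝ) {m : ℝ} (hm₀ : 0 ≤ m) (hm : m < 1) :
    Jrec θbar m = artanh (ksn (2 * θbar / π) m) / 2 := by
  have hu : θbar * (2 * ellK m) / π = 2 * θbar / π * ellK m := by ring
  have hdn : dn (2 * θbar / π * ellK m) m = √(1 - ksn (2 * θbar / π) m ^ 2) := by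
    rw [dn, ksn, mul_pow, sq_sqrt hm₀]
  rw [Jrec, hu, hdn, ← log_one_add_div_sqrt_one_sub_sq (ksn_mem_Ioo hm₀ hm), ksn]
  ring

/-- For fixed `θ̄ ∈ (0,π/2)`, the reciprocal-regime coupling constant `J̃(θ̄|m)`
is strictly increasing in `m ∈ (0,1)`, tends to `0` as `m → 0⁺` and to `+∞` as
`m → 1⁻`; equivalently, as `k² = 1/m` increases from `1` to `+∞` the coupling
constant decreases from `+∞` to `0`. -/
theorem Jrec_monotone_range (θbar : ℝ) (hθ : θbar ∈ Set.Ioo 0 (π / 2)) :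
    StrictMonoOn (fun m => Jrec θbar m) (Set.Ioo 0 1) ∧
    Filter.Tendsto (fun m => Jrec θbar m) (nhdsWithin 0 (Set.Ioi 0)) (nhds 0) ∧
    Filter.Tendsto (fun m => Jrec θbar m) (nhdsWithin 1 (Set.Iio 1)) Filter.atTop := by
  set c := 2 * θbar / π
  have hc : c ∈ Ioo 0 1 :=
    ⟨div_pos (by linarith [hθ.1]) pi_pos, (div_lt_one pi_pos).2 (by linarith [hθ.2])⟩
  have hJ : EqOn (fun m => artanh (ksn c m) / 2) (Jrec θbar) (Ioo 0 1) :=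
    fun m hm => (Jrec_eq_half_artanh θbar hm.1.le hm.2).symm
  refine ⟨fun m₁ h₁ m₂ h₂ h => ?_, ?_, ?_⟩
  · show Jrec θbar m₁ < Jrec θbar m₂
    rw [← hJ h₁, ← hJ h₂]
    exact div_lt_div_of_pos_right (artanh_lt_artanh (ksn_mem_Ioo h₁.1.le h₁.2).1
      (ksn_mem_Ioo h₂.1.le h₂.2).2 (strictMonoOn_ksn hc (Ioo_subset_Ico_self h₁)
      (Ioo_subset_Ico_self h₂) h)) two_pos
  · have h : Tendsto (fun m => artanh (ksn c m) / 2) (𝓝 0) (𝓝 0) := by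
      simpa using
        ((continuousAt_artanh (by norm_num)).tendsto.comp (tendsto_ksn_nhds_zero c)).div_const 2
    exact (h.mono_left nhdsWithin_le_nhds).congr' (eventuallyEq_of_mem (Ioo_mem_nhdsGT one_pos) hJ)
  · exact ((tendsto_artanh_nhdsLT_one.comp (tendsto_ksn_nhdsLT_one hc)).atTop_div_const
      two_pos).congr' (eventuallyEq_of_mem (Ioo_mem_nhdsLT one_pos) hJ)
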